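/- Let ρ : ℝ² → ℝ be smooth, compactly supported, with ∫ρ = 1, and for δ ∈ (0,1] set ρ_δ^{(2)}(t,x) = δ^{-1}(ρ⋆ρ)(δ^{-1}t, x). Then c_ρ(δ) := ∫ P(z) ρ_δ^{(2)}(z) dz converges as δ → 0 to ∫_0^∞ (ρ⋆ρ)(t,0) dt, where P is the heat kernel on ℝ vanishing for t ≤ 0. -/

import Mathlib

open MeasureTheory Real Filter

/-- The heat kernel on `ℝ` as a space-time kernel, vanishing for `t ≤ 0`. -/
noncomputable def heatKernelST (z : ℝ × ℝ) : ℝ :=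
  if 0 < z.1 then (Real.sqrt (4 * Real.pi * z.1))⁻¹ * Real.exp (-(z.2 ^ 2) / (4 * z.1)) else 0

/-- Space-time convolution on `ℝ²`. -/
noncomputable def convST (f g : ℝ × ℝ → ℝ) (z : ℝ × ℝ) : ℝ := ∫ w : ℝ × ℝ, f w * g (z - w)

lemma heatKernelST_nonneg (z : ℝ × ℝ) : 0 ≤ heatKernelST z := by
  unfold heatKernelST
  split
  · positivity
  · exact le_refl 0

lemma heatKernelST_of_nonpos {t : ℝ} (ht : t ≤ 0) (x : ℝ) : heatKernelST (t, x) = 0 :=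
  if_neg (not_lt.mpr ht)

lemma measurable_heatKernelST : Measurable heatKernelST := by
  unfold heatKernelST
  apply Measurable.ite (measurableSet_lt measurable_const measurable_fst)
  · fun_prop
  · exact measurable_const

lemma heatKernelST_eq {t : ℝ} (ht : 0 < t) :
    (fun x : ℝ => heatKernelST (t, x))
      = fun x => (Real.sqrt (4 * Real.pi * t))⁻¹ * Real.exp (-(4 * t)⁻¹ * x ^ 2) := by
  funext x
  simp only [heatKernelST, if_pos ht]
  congr 1
  ring_nf

lemma heatKernelST_integrable {t : ℝ} (ht : 0 < t) :
    Integrable (fun x : ℝ => heatKernelST (t, x)) := by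
  rw [heatKernelST_eq ht]
  exact (integrable_exp_neg_mul_sq (by positivity)).const_mul _

lemma heatKernelST_integral {t : ℝ} (ht : 0 < t) :
    ∫ x : ℝ, heatKernelST (t, x) = 1 := by
  rw [heatKernelST_eq ht, MeasureTheory.integral_const_mul, integral_gaussian]
  have h1 : π / (4 * t)⁻¹ = 4 * π * t := by field_simp
  rw [h1, inv_mul_cancel₀ (ne_of_gt (Real.sqrt_pos.mpr (by positivity)))]

lemma gauss_int : ∫ u : ℝ, Real.exp (-u ^ 2) = Real.sqrt π := by
  have := integral_gaussian 1
  simpa using this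

lemma heat_approx {f : ℝ → ℝ} (hf : Continuous f) {C : ℝ} (hC : ∀ x, ‖f x‖ ≤ C) :
    Tendsto (fun τ : ℝ => ∫ x : ℝ, heatKernelST (τ, x) * f x) (nhdsWithin 0 (Set.Ioi 0))
      (nhds (f 0)) := by
  have hC0 : 0 ≤ C := le_trans (norm_nonneg _) (hC 0)
  -- the rescaled family
  have key : ∀ τ ∈ Set.Ioi (0 : ℝ),
      (fun τ : ℝ => ∫ x : ℝ, heatKernelST (τ, x) * f x) τ
        = ∫ u : ℝ, (Real.sqrt π)⁻¹ * Real.exp (-u ^ 2) * f (Real.sqrt (4 * τ) * u) := by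
    intro τ hτ
    have hτ' : (0 : ℝ) < τ := hτ
    have hc : 0 < Real.sqrt (4 * τ) := Real.sqrt_pos.mpr (by linarith)
    have hsub := MeasureTheory.Measure.integral_comp_mul_left
      (fun x => heatKernelST (τ, x) * f x) (Real.sqrt (4 * τ))
    rw [abs_of_pos (inv_pos.mpr hc), smul_eq_mul] at hsub
    have h2 : ∫ x : ℝ, heatKernelST (τ, x) * f x
        = Real.sqrt (4 * τ) * ∫ u : ℝ, heatKernelST (τ, Real.sqrt (4 * τ) * u)
            * f (Real.sqrt (4 * τ) * u) := by
      rw [hsub, ← mul_assoc, mul_inv_cancel₀ hc.ne', one_mul]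
    simp only []
    rw [h2, ← MeasureTheory.integral_const_mul]
    congr 1
    funext u
    simp only [heatKernelST, if_pos hτ']
    have e1 : -((Real.sqrt (4 * τ) * u) ^ 2) / (4 * τ) = -u ^ 2 := by
      rw [mul_pow, Real.sq_sqrt (by linarith : (0:ℝ) ≤ 4 * τ)]
      field_simp
    have e2 : Real.sqrt (4 * π * τ) = Real.sqrt π * Real.sqrt (4 * τ) := by
      rw [← Real.sqrt_mul pi_pos.le]
      ring_nf
    rw [e1, e2]
    have hπ : (0:ℝ) < Real.sqrt π := Real.sqrt_pos.mpr pi_pos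
    field_simp
  have lim : Tendsto
      (fun τ : ℝ => ∫ u : ℝ, (Real.sqrt π)⁻¹ * Real.exp (-u ^ 2) * f (Real.sqrt (4 * τ) * u))
      (nhdsWithin 0 (Set.Ioi 0)) (nhds (f 0)) := by
    have hval : ∫ u : ℝ, (Real.sqrt π)⁻¹ * Real.exp (-u ^ 2) * f 0 = f 0 := by
      rw [MeasureTheory.integral_mul_const, MeasureTheory.integral_const_mul, gauss_int,
        inv_mul_cancel₀ (ne_of_gt (Real.sqrt_pos.mpr pi_pos)), one_mul]
    rw [← hval]
    apply tendsto_integral_filter_of_dominated_convergence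
      (bound := fun u : ℝ => (Real.sqrt π)⁻¹ * Real.exp (-u ^ 2) * C)
    · filter_upwards with τ
      exact (((continuous_const.mul (by continuity : Continuous fun u : ℝ => Real.exp (-u ^ 2))).mul
        (hf.comp (continuous_const.mul continuous_id))).aestronglyMeasurable)
    · filter_upwards with τ
      filter_upwards with u
      rw [norm_mul, Real.norm_of_nonneg (by positivity : (0:ℝ) ≤ (Real.sqrt π)⁻¹ * Real.exp (-u ^ 2))]
      exact mul_le_mul_of_nonneg_left (hC _) (by positivity)
    · have : (fun u : ℝ => (Real.sqrt π)⁻¹ * Real.exp (-u ^ 2) * C)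
          = fun u : ℝ => (Real.sqrt π)⁻¹ * Real.exp (-(1:ℝ) * u ^ 2) * C := by
        funext u; norm_num
      rw [this]
      exact ((integrable_exp_neg_mul_sq one_pos).const_mul _).mul_const _
    · filter_upwards with u
      have h1 : Tendsto (fun τ : ℝ => Real.sqrt (4 * τ) * u) (nhds 0) (nhds 0) := by
        have hcont : Continuous fun τ : ℝ => Real.sqrt (4 * τ) * u := by fun_prop
        have := hcont.tendsto (0 : ℝ)
        simpa using this
      exact Tendsto.const_mul _ ((hf.tendsto 0).comp (h1.mono_left nhdsWithin_le_nhds))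
  exact lim.congr' (Filter.eventuallyEq_of_mem self_mem_nhdsWithin key).symm

open scoped Convolution

/-- Removing the temporal regularisation at fixed spatial regularisation: with
`ρ_δ⁽²⁾(t,x) = δ⁻¹ (ρ⋆ρ)(δ⁻¹ t, x)`, the constant `c_ρ(δ) = ∫ P ρ_δ⁽²⁾` converges,
as `δ → 0⁺`, to `∫_0^∞ (ρ⋆ρ)(t,0) dt`. -/
theorem crho_temporal_limit (ρ : ℝ × ℝ → ℝ)
    (hsmooth : ContDiff ℝ (⊤ : ℕ∞) ρ) (hsupp : HasCompactSupport ρ)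
    (hint : ∫ z : ℝ × ℝ, ρ z = 1) :
    Tendsto
      (fun δ : ℝ => ∫ z : ℝ × ℝ, heatKernelST z * (δ⁻¹ * convST ρ ρ (z.1 / δ, z.2)))
      (nhdsWithin 0 (Set.Ioi 0))
      (nhds (∫ t in Set.Ioi (0 : ℝ), convST ρ ρ (t, 0))) := by
  set φ : ℝ × ℝ → ℝ := convST ρ ρ with hφdef
  have hρc : Continuous ρ := hsmooth.continuous
  have hρi : Integrable ρ := hρc.integrable_of_hasCompactSupport hsupp
  have hφeq : φ = ρ ⋆[ContinuousLinearMap.mul ℝ ℝ, volume] ρ := rfl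
  have hφcont : Continuous φ := by
    rw [hφeq]
    exact HasCompactSupport.continuous_convolution_right _ hsupp hρi.locallyIntegrable hρc
  have hφsupp : HasCompactSupport φ := by
    rw [hφeq]
    exact HasCompactSupport.convolution (L := ContinuousLinearMap.mul ℝ ℝ) hsupp hsupp
  obtain ⟨C, hC⟩ := hφsupp.exists_bound_of_continuous hφcont
  have hC0 : 0 ≤ C := le_trans (norm_nonneg _) (hC (0, 0))
  obtain ⟨R, hR⟩ : ∃ R : ℝ, ∀ s x : ℝ, R < |s| → φ (s, x) = 0 := by
    obtain ⟨R, hRsub⟩ := (Metric.isBounded_iff_subset_closedBall 0).mp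
      hφsupp.isCompact.isBounded
    refine ⟨R, fun s x hs => image_eq_zero_of_notMem_tsupport fun hmem => ?_⟩
    have hle := hRsub hmem
    rw [Metric.mem_closedBall, dist_zero_right, Prod.norm_def] at hle
    have : |s| ≤ R := le_trans (le_max_left _ _) hle
    linarith
  -- measurability of the s-integrals
  have hδsmeas : ∀ δ : ℝ, AEStronglyMeasurable
      (fun s : ℝ => ∫ x : ℝ, heatKernelST (δ * s, x) * φ (s, x)) volume := by
    intro δ
    have hK : Measurable fun p : ℝ × ℝ => heatKernelST (δ * p.1, p.2) * φ p :=
      (measurable_heatKernelST.comp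
        ((measurable_fst.const_mul δ).prodMk measurable_snd)).mul hφcont.measurable
    exact (hK.stronglyMeasurable.integral_prod_right').aestronglyMeasurable
  -- uniform bound
  have hGbound : ∀ δ : ℝ, 0 < δ → ∀ s : ℝ,
      ‖∫ x : ℝ, heatKernelST (δ * s, x) * φ (s, x)‖
        ≤ Set.indicator (Set.Icc (-R) R) (fun _ => C) s := by
    intro δ hδ s
    by_cases hs : s ∈ Set.Icc (-R) R
    · rw [Set.indicator_of_mem hs]
      rcases le_or_gt (δ * s) 0 with hts | hts
      · have hzero : (fun x : ℝ => heatKernelST (δ * s, x) * φ (s, x)) = fun _ => 0 := by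
          funext x; rw [heatKernelST_of_nonpos hts, zero_mul]
        rw [hzero, integral_zero, norm_zero]; exact hC0
      · refine le_trans (norm_integral_le_integral_norm _) ?_
        have hint2 := (heatKernelST_integrable hts).mul_const C
        refine le_trans (integral_mono_of_nonneg (ae_of_all _ fun x => norm_nonneg _) hint2
          (ae_of_all _ fun x => ?_)) ?_
        · dsimp only
          rw [norm_mul, Real.norm_of_nonneg (heatKernelST_nonneg _)]
          exact mul_le_mul_of_nonneg_left (hC (s, x)) (heatKernelST_nonneg _)
        · rw [MeasureTheory.integral_mul_const, heatKernelST_integral hts, one_mul]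
    · rw [Set.indicator_of_notMem hs]
      have hRs : R < |s| := by
        simp only [Set.mem_Icc, not_and_or, not_le] at hs
        rcases hs with h | h
        · exact lt_of_lt_of_le (by linarith) (neg_le_abs s)
        · exact lt_of_lt_of_le h (le_abs_self s)
      have hzero : (fun x : ℝ => heatKernelST (δ * s, x) * φ (s, x)) = fun _ => 0 := by
        funext x; rw [hR s x hRs, mul_zero]
      rw [hzero, integral_zero, norm_zero]
  -- pointwise limit
  have hGlim : ∀ᵐ s : ℝ, Tendsto (fun δ : ℝ => ∫ x : ℝ, heatKernelST (δ * s, x) * φ (s, x))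
      (nhdsWithin 0 (Set.Ioi 0)) (nhds (Set.indicator (Set.Ioi 0) (fun t => φ (t, 0)) s)) := by
    have h0 : ∀ᵐ s : ℝ, s ≠ (0 : ℝ) := by
      refine ae_iff.mpr ?_
      have : {a : ℝ | ¬a ≠ 0} = {0} := by ext a; simp
      rw [this]
      exact Real.volume_singleton
    filter_upwards [h0] with s hs
    rcases lt_or_gt_of_ne hs with hneg | hpos
    · rw [Set.indicator_of_notMem (by simpa using not_lt.mpr hneg.le : s ∉ Set.Ioi (0:ℝ))]
      apply Tendsto.congr' (f₁ := fun _ : ℝ => (0 : ℝ))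
      · symm
        filter_upwards [self_mem_nhdsWithin] with δ hδ
        have hzero : (fun x : ℝ => heatKernelST (δ * s, x) * φ (s, x)) = fun _ => 0 := by
          funext x
          rw [heatKernelST_of_nonpos (by nlinarith [Set.mem_Ioi.mp hδ] : δ * s ≤ 0), zero_mul]
        rw [hzero, integral_zero]
      · exact tendsto_const_nhds
    · rw [Set.indicator_of_mem (Set.mem_Ioi.mpr hpos)]
      have hmap : Tendsto (fun δ : ℝ => δ * s) (nhdsWithin 0 (Set.Ioi 0))
          (nhdsWithin 0 (Set.Ioi 0)) := by
        rw [tendsto_nhdsWithin_iff]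
        constructor
        · have hcont : Continuous fun δ : ℝ => δ * s := by fun_prop
          have := hcont.tendsto (0 : ℝ)
          simp only [zero_mul] at this
          exact this.mono_left nhdsWithin_le_nhds
        · filter_upwards [self_mem_nhdsWithin] with δ hδ
          exact mul_pos (Set.mem_Ioi.mp hδ) hpos
      exact (heat_approx (hφcont.comp (Continuous.prodMk_right s)) (fun x => hC (s, x))).comp hmap
  -- dominated convergence
  have hIoi : Tendsto (fun δ : ℝ => ∫ s : ℝ, ∫ x : ℝ, heatKernelST (δ * s, x) * φ (s, x))
      (nhdsWithin 0 (Set.Ioi 0)) (nhds (∫ t in Set.Ioi (0 : ℝ), φ (t, 0))) := by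
    rw [← integral_indicator measurableSet_Ioi]
    apply tendsto_integral_filter_of_dominated_convergence
      (bound := Set.indicator (Set.Icc (-R) R) fun _ => C)
    · filter_upwards with δ; exact hδsmeas δ
    · filter_upwards [self_mem_nhdsWithin] with δ hδ
      exact ae_of_all _ (hGbound δ (Set.mem_Ioi.mp hδ))
    · exact (integrable_indicator_iff measurableSet_Icc).mpr
        (integrableOn_const measure_Icc_lt_top.ne)
    · exact hGlim
  -- rescaling identity
  have hkey : ∀ δ : ℝ, 0 < δ →
      ∫ z : ℝ × ℝ, heatKernelST z * (δ⁻¹ * φ (z.1 / δ, z.2))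
        = ∫ s : ℝ, ∫ x : ℝ, heatKernelST (δ * s, x) * φ (s, x) := by
    intro δ hδ
    have hδinv : (0 : ℝ) < δ⁻¹ := inv_pos.mpr hδ
    have hFcont2 : Continuous fun z : ℝ × ℝ => δ⁻¹ * φ (z.1 / δ, z.2) :=
      continuous_const.mul (hφcont.comp ((continuous_fst.div_const δ).prodMk continuous_snd))
    have hFmeas : Measurable fun z : ℝ × ℝ => heatKernelST z * (δ⁻¹ * φ (z.1 / δ, z.2)) :=
      measurable_heatKernelST.mul hFcont2.measurable
    have hslice : ∀ t : ℝ, Integrable fun x : ℝ =>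
        heatKernelST (t, x) * (δ⁻¹ * φ (t / δ, x)) := by
      intro t
      rcases le_or_gt t 0 with ht | ht
      · have hzero : (fun x : ℝ => heatKernelST (t, x) * (δ⁻¹ * φ (t / δ, x))) = fun _ => 0 := by
          funext x; rw [heatKernelST_of_nonpos ht, zero_mul]
        rw [hzero]; exact integrable_zero _ _ _
      · have h1 : Integrable fun x : ℝ => (δ⁻¹ * φ (t / δ, x)) * heatKernelST (t, x) :=
          (heatKernelST_integrable ht).bdd_mul
            (continuous_const.mul (hφcont.comp (Continuous.prodMk_right _))).aestronglyMeasurable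
            (c := δ⁻¹ * C) (ae_of_all _ fun x => by
              rw [norm_mul, Real.norm_of_nonneg hδinv.le]
              exact mul_le_mul_of_nonneg_left (hC _) hδinv.le)
        exact h1.congr (ae_of_all _ fun x => mul_comm _ _)
    have hnorm : Integrable fun t : ℝ =>
        ∫ x : ℝ, ‖heatKernelST (t, x) * (δ⁻¹ * φ (t / δ, x))‖ := by
      apply Integrable.mono' (g := Set.indicator (Set.Ioc 0 (δ * R)) fun _ => δ⁻¹ * C)
      · exact (integrable_indicator_iff measurableSet_Ioc).mpr
          (integrableOn_const measure_Ioc_lt_top.ne)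
      · exact (hFmeas.norm.stronglyMeasurable.integral_prod_right').aestronglyMeasurable
      · refine ae_of_all _ fun t => ?_
        rw [Real.norm_of_nonneg (integral_nonneg fun x => norm_nonneg _)]
        rcases le_or_gt t 0 with ht | ht
        · have hzero : (fun x : ℝ => ‖heatKernelST (t, x) * (δ⁻¹ * φ (t / δ, x))‖)
              = fun _ => 0 := by
            funext x; rw [heatKernelST_of_nonpos ht, zero_mul, norm_zero]
          rw [hzero, integral_zero]
          exact Set.indicator_nonneg (fun _ _ => by positivity) t
        · rcases le_or_gt t (δ * R) with htR | htR
          · rw [Set.indicator_of_mem (Set.mem_Ioc.mpr ⟨ht, htR⟩)]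
            have hint2 := (heatKernelST_integrable ht).mul_const (δ⁻¹ * C)
            refine le_trans (integral_mono_of_nonneg (ae_of_all _ fun x => norm_nonneg _)
              hint2 (ae_of_all _ fun x => ?_)) ?_
            · dsimp only
              rw [norm_mul, Real.norm_of_nonneg (heatKernelST_nonneg _)]
              refine mul_le_mul_of_nonneg_left ?_ (heatKernelST_nonneg _)
              rw [norm_mul, Real.norm_of_nonneg hδinv.le]
              exact mul_le_mul_of_nonneg_left (hC _) hδinv.le
            · rw [MeasureTheory.integral_mul_const, heatKernelST_integral ht, one_mul]
          · have hnm : t ∉ Set.Ioc 0 (δ * R) := by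
              simp only [Set.mem_Ioc, not_and_or, not_le]
              exact Or.inr htR
            rw [Set.indicator_of_notMem hnm]
            have hRt : R < |t / δ| := by
              rw [abs_of_pos (div_pos ht hδ)]
              rw [lt_div_iff₀ hδ]
              linarith [htR]
            have hzero : (fun x : ℝ => ‖heatKernelST (t, x) * (δ⁻¹ * φ (t / δ, x))‖)
                = fun _ => 0 := by
              funext x; rw [hR _ x hRt, mul_zero, mul_zero, norm_zero]
            rw [hzero, integral_zero]
    have hFint : Integrable (fun z : ℝ × ℝ => heatKernelST z * (δ⁻¹ * φ (z.1 / δ, z.2)))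
        (volume.prod volume) := by
      refine (integrable_prod_iff ?_).mpr ⟨ae_of_all _ hslice, hnorm⟩
      exact hFmeas.aestronglyMeasurable
    set g : ℝ → ℝ := fun t => ∫ x : ℝ, heatKernelST (t, x) * (δ⁻¹ * φ (t / δ, x)) with hg
    have hsub := MeasureTheory.Measure.integral_comp_mul_left g δ
    rw [abs_of_pos hδinv, smul_eq_mul] at hsub
    have h4 : ∀ s : ℝ, ∫ x : ℝ, heatKernelST (δ * s, x) * φ (s, x) = δ * g (δ * s) := by
      intro s
      rw [hg]
      simp only []
      rw [mul_div_cancel_left₀ s hδ.ne', ← MeasureTheory.integral_const_mul]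
      refine integral_congr_ae (ae_of_all _ fun x => ?_)
      dsimp only
      rw [show δ * (heatKernelST (δ * s, x) * (δ⁻¹ * φ (s, x)))
          = (δ * δ⁻¹) * (heatKernelST (δ * s, x) * φ (s, x)) from by ring,
        mul_inv_cancel₀ hδ.ne', one_mul]
    calc ∫ z : ℝ × ℝ, heatKernelST z * (δ⁻¹ * φ (z.1 / δ, z.2))
        = ∫ t : ℝ, g t := by
          rw [MeasureTheory.Measure.volume_eq_prod]
          exact MeasureTheory.integral_prod _ hFint
      _ = δ * (δ⁻¹ * ∫ t : ℝ, g t) := by rw [← mul_assoc, mul_inv_cancel₀ hδ.ne', one_mul]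
      _ = δ * ∫ s : ℝ, g (δ * s) := by rw [hsub]
      _ = ∫ s : ℝ, δ * g (δ * s) := (MeasureTheory.integral_const_mul δ _).symm
      _ = ∫ s : ℝ, ∫ x : ℝ, heatKernelST (δ * s, x) * φ (s, x) := by
          exact integral_congr_ae (ae_of_all _ fun s => (h4 s).symm)
  refine Tendsto.congr' ?_ hIoi
  filter_upwards [self_mem_nhdsWithin] with δ hδ
  exact (hkey δ (Set.mem_Ioi.mp hδ)).symm
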